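/- Let (e i)_{i ≥ 1} be an orthonormal family in H whose linear span is dense (an orthonormal basis). Then for every infinite subset S ⊆ {2, 3, 4, …} there is no pair (s, t) with ‖s‖ = 1, s in the closed linear span of {e i : i ∈ S}, and π/2 = t + arccos⟨e i, s⟩ for all i ∈ S. (The truncated sound ranging problem on the unit sphere with geodesic distance d(x, y) = arccos⟨x, y⟩, with arrival times generated by the source e 1 emitting at time 0, has no solution on the unit sphere of the closed span of the kept sensors.) -/

import Mathlib

/-!
Since every kept sensor `e i` and the solution `s` are unit vectors, the arrival-time equations
force `⟪e i, s⟫ = cos (π / 2 - t) = sin t` for all `i ∈ S`. By Bessel's inequality the inner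
products of `s` with the infinitely many orthonormal vectors `e i` are square-summable, so this
common value is `0`. Then `s` is orthogonal to the span of the kept sensors, hence to its closure,
which contains `s`; so `s = 0`, contradicting `‖s‖ = 1`.
-/

open RealInnerProductSpace

section

variable {𝕜 E : Type*} [RCLike 𝕜] [NormedAddCommGroup E] [InnerProductSpace 𝕜 E]

theorem Orthonormal.eq_zero_of_forall_inner_eq {ι : Type*} [Infinite ι] {v : ι → E}
    (hv : Orthonormal 𝕜 v) {x : E} {c : 𝕜} (h : ∀ i, inner 𝕜 (v i) x = c) : c = 0 := by
  have hsum := hv.inner_products_summable (x := x)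
  simp only [h] at hsum
  simpa using (summable_const_iff _).mp hsum

theorem orthonormal_restrict_of_orthonormal_succ {e : ℕ → E}
    (he : Orthonormal 𝕜 fun i => e (i + 1)) {S : Set ℕ} (hS : 0 ∉ S) :
    Orthonormal 𝕜 fun i : S => e i := by
  have hpos : ∀ i : S, (i : ℕ) ≠ 0 := fun i h => hS (h ▸ i.2)
  have hinj : Function.Injective fun i : S => (i : ℕ) - 1 := fun i j hij => by
    have := hpos i
    have := hpos j
    exact Subtype.ext (by simp only at hij; omega)
  convert he.comp _ hinj using 2 with i
  simp only [Function.comp_apply, Nat.sub_add_cancel (Nat.one_le_iff_ne_zero.mpr (hpos i))]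

theorem eq_zero_of_mem_closure_span_of_forall_inner_eq_zero {A : Set E} {x : E}
    (hx : x ∈ closure (Submodule.span 𝕜 A : Set E)) (h : ∀ a ∈ A, inner 𝕜 a x = 0) :
    x = 0 := by
  have hspan : (Submodule.span 𝕜 A : Set E) ⊆ (𝕜 ∙ x)ᗮ :=
    Submodule.span_le.mpr fun a ha => Submodule.mem_orthogonal_singleton_iff_inner_left.mpr (h a ha)
  have hxx : x ∈ (𝕜 ∙ x)ᗮ := closure_minimal hspan (𝕜 ∙ x).isClosed_orthogonal hx
  exact inner_self_eq_zero.mp (Submodule.mem_orthogonal_singleton_iff_inner_left.mp hxx)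

end

theorem Real.cos_arccos_real_inner {F : Type*} [NormedAddCommGroup F] [InnerProductSpace ℝ F]
    {u v : F} (hu : ‖u‖ ≤ 1) (hv : ‖v‖ ≤ 1) : Real.cos (Real.arccos ⟪u, v⟫) = ⟪u, v⟫ := by
  have hle : |⟪u, v⟫| ≤ 1 :=
    (abs_real_inner_le_norm u v).trans (mul_le_one₀ hu (norm_nonneg v) hv)
  exact Real.cos_arccos (abs_le.mp hle).1 (abs_le.mp hle).2

theorem srp_sphere_truncated_no_solution_general
    {H : Type*} [NormedAddCommGroup H] [InnerProductSpace ℝ H]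
    (e : ℕ → H)
    (he : Orthonormal ℝ (fun i : ℕ => e (i + 1)))
    (S : Set ℕ) (hS2 : ∀ i ∈ S, 2 ≤ i) (hSinf : S.Infinite) :
    ¬ ∃ (s : H) (t : ℝ),
        ‖s‖ = 1 ∧
        s ∈ closure (Submodule.span ℝ (e '' S) : Set H) ∧
        ∀ i ∈ S, Real.pi / 2 = t + Real.arccos ⟪e i, s⟫ := by
  rintro ⟨s, t, hs, hs_mem, htime⟩
  have hON : Orthonormal ℝ fun i : S => e i :=
    orthonormal_restrict_of_orthonormal_succ he fun h0 => absurd (hS2 0 h0) (by norm_num)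
  have hinner : ∀ i : S, ⟪e i, s⟫ = Real.sin t := fun i => by
    rw [← Real.cos_pi_div_two_sub, ← Real.cos_arccos_real_inner (hON.1 i).le hs.le,
      eq_sub_of_add_eq' (htime i i.2).symm]
  have : Infinite S := hSinf.to_subtype
  have hsin : Real.sin t = 0 := hON.eq_zero_of_forall_inner_eq hinner
  have hs0 : s = 0 := eq_zero_of_mem_closure_span_of_forall_inner_eq_zero hs_mem <| by
    rintro _ ⟨i, hi, rfl⟩
    exact (hinner ⟨i, hi⟩).trans hsin
  simp [hs0] at hs

/-- The truncated sound ranging problem on the unit sphere with geodesic distance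
`d(x, y) = arccos ⟪x, y⟫`, keeping only the sensors `{e i : i ∈ S}` with
`S ⊆ {2, 3, ...}` infinite, with arrival times generated by the source `e 1`
emitting at time `0`, has no solution on the unit sphere of the closed span of
the kept sensors. -/
theorem srp_sphere_truncated_no_solution
    {H : Type*} [NormedAddCommGroup H] [InnerProductSpace ℝ H] [CompleteSpace H]
    (e : ℕ → H)
    (he : Orthonormal ℝ (fun i : ℕ => e (i + 1)))
    (hdense : Dense (Submodule.span ℝ (Set.range fun i : ℕ => e (i + 1)) : Set H))
    (S : Set ℕ) (hS2 : ∀ i ∈ S, 2 ≤ i) (hSinf : S.Infinite) :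
    ¬ ∃ (s : H) (t : ℝ),
        ‖s‖ = 1 ∧
        s ∈ closure (Submodule.span ℝ (e '' S) : Set H) ∧
        ∀ i ∈ S, Real.pi / 2 = t + Real.arccos ⟪e i, s⟫ :=
  srp_sphere_truncated_no_solution_general e he S hS2 hSinf
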